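/- arXiv:1604.01628 — 3 statements merged into one kernel-verified Lean document; each statement's English description precedes it below -/
import Mathlib

section
/- For every $x\in\mathbb{R}$, $s>0$, $\varepsilon>0$ and $\gamma>0$ with $\varepsilon\sqrt{s}\le\gamma$, and every $\sigma$-finite measure $\nu$ on $\mathbb{R}$ with $N(\nu,\gamma):=\sup_x \nu([x-\gamma,x+\gamma])<\infty$, one has $\int_0^s \int_{\mathbb{R}} \frac{1}{\sqrt{2\pi v \varepsilon^2}} e^{-\frac{(y-x)^2}{2v\varepsilon^2}}\,\nu(dy)\,dv \le \sqrt{c_0}\, N(\nu,\gamma)\, \sqrt{\frac{s}{\varepsilon^2}}$, where $c_0 = \frac{2}{\pi}\left(1+2\sum_{k=1}^\infty e^{-(2k-1)^2/2}\right)^2$. -/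
/-! Cover `ℝ` by the translates `[x + (2k - 1)γ, x + (2k + 1)γ]`, `k ∈ ℤ`, each of `ν`-mass at most
`N`. When `v ε² ≤ γ²` the Gaussian factor is at most `1` on the central translate and at most
`exp (-(2|k| - 1)² / 2)` on the others, so the inner integral is at most `N S / √(2π v ε²)` with
`S = 1 + 2 ∑ exp (-(2k - 1)² / 2)`. Integrating `v ^ (-1/2)` over `(0, s]` gives `2 √s`, and
`2 S / √(2π) = √c0`. -/

open MeasureTheory Real

noncomputable def c0 : ℝ :=
  (2 / Real.pi) * (1 + 2 * ∑' k : ℕ, Real.exp (-(2 * ((k : ℝ) + 1) - 1) ^ 2 / 2)) ^ 2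

open Set ENNReal

theorem ENNReal.tsum_int_natAbs (f : ℕ → ℝ≥0∞) :
    ∑' k : ℤ, f k.natAbs = f 0 + 2 * ∑' n : ℕ, f (n + 1) := by
  rw [tsum_of_nat_of_neg_add_one ENNReal.summable ENNReal.summable,
    tsum_eq_zero_add' ENNReal.summable]
  simp only [Int.natAbs_natCast, Int.natAbs_neg]
  rw [two_mul, add_assoc]
  rfl

-- On the translate of index `k`, `|y - x| ≥ (2|k| - 1) γ`; this is the resulting bound on the
-- Gaussian factor, indexed by `|k|`.
noncomputable def shellWeight : ℕ → ℝ
  | 0 => 1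
  | n + 1 => exp (-(2 * ((n : ℝ) + 1) - 1) ^ 2 / 2)

noncomputable def shellSum : ℝ := 1 + 2 * ∑' n : ℕ, shellWeight (n + 1)

theorem shellWeight_nonneg (n : ℕ) : 0 ≤ shellWeight n := by
  cases n <;> simp only [shellWeight] <;> positivity

theorem summable_shellWeight_succ : Summable fun n : ℕ ↦ shellWeight (n + 1) := by
  refine summable_exp_neg_nat.of_nonneg_of_le (fun n ↦ shellWeight_nonneg _) fun n ↦ ?_
  refine exp_le_exp.2 ?_
  nlinarith [(Nat.cast_nonneg n : (0 : ℝ) ≤ n)]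

theorem shellSum_nonneg : 0 ≤ shellSum := by
  have : 0 ≤ ∑' n : ℕ, shellWeight (n + 1) := tsum_nonneg fun n ↦ shellWeight_nonneg _
  rw [shellSum]
  positivity

theorem tsum_ofReal_shellWeight_natAbs :
    ∑' k : ℤ, ENNReal.ofReal (shellWeight k.natAbs) = ENNReal.ofReal shellSum := by
  rw [ENNReal.tsum_int_natAbs (fun n ↦ ENNReal.ofReal (shellWeight n)),
    ← ENNReal.ofReal_tsum_of_nonneg (fun n ↦ shellWeight_nonneg _) summable_shellWeight_succ,
    shellSum, ENNReal.ofReal_add zero_le_one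
      (mul_nonneg zero_le_two (tsum_nonneg fun n ↦ shellWeight_nonneg _)),
    ENNReal.ofReal_mul zero_le_two]
  simp [shellWeight]

theorem c0_eq : c0 = 2 / π * shellSum ^ 2 := rfl

theorem exp_neg_sq_div_le_shellWeight {x y γ t : ℝ} (k : ℤ) (ht : 0 < t) (htγ : t ≤ γ ^ 2)
    (hy : y ∈ Icc (x + 2 * k * γ - γ) (x + 2 * k * γ + γ)) :
    exp (-(y - x) ^ 2 / (2 * t)) ≤ shellWeight k.natAbs := by
  obtain ⟨hy₁, hy₂⟩ := hy
  have hγ : 0 ≤ γ := by linarith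
  cases hk : k.natAbs with
  | zero =>
    exact exp_le_one_iff.2 <|
      div_nonpos_of_nonpos_of_nonneg (neg_nonpos.2 (sq_nonneg _)) (by positivity)
  | succ n =>
    have ha : 0 ≤ 2 * ((n : ℝ) + 1) - 1 := by linarith [(n.cast_nonneg : (0 : ℝ) ≤ n)]
    have hdist : (2 * ((n : ℝ) + 1) - 1) * γ ≤ |y - x| := by
      have habs : |(2 * k * γ : ℝ)| = 2 * ((n : ℝ) + 1) * γ := by
        rw [abs_mul, abs_mul, abs_of_nonneg hγ, ← Int.cast_abs, Int.abs_eq_natAbs, hk]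
        norm_num
      have := abs_sub_abs_le_abs_sub (2 * k * γ : ℝ) (y - x)
      have := abs_le.2 (⟨by linarith, by linarith⟩ : -γ ≤ 2 * k * γ - (y - x) ∧ _ ≤ γ)
      linarith
    have hsq : (2 * ((n : ℝ) + 1) - 1) ^ 2 * t ≤ (y - x) ^ 2 :=
      calc (2 * ((n : ℝ) + 1) - 1) ^ 2 * t ≤ ((2 * ((n : ℝ) + 1) - 1) * γ) ^ 2 := by
            rw [mul_pow]; gcongr
        _ ≤ |y - x| ^ 2 := pow_le_pow_left₀ (by positivity) hdist 2
        _ = (y - x) ^ 2 := sq_abs _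
    refine exp_le_exp.2 ?_
    rw [neg_div, neg_div, neg_le_neg_iff, div_le_div_iff₀ two_pos (by positivity)]
    linarith

theorem iUnion_Icc_two_mul_add (x : ℝ) {γ : ℝ} (hγ : 0 < γ) :
    ⋃ k : ℤ, Icc (x + 2 * k * γ - γ) (x + 2 * k * γ + γ) = univ := by
  rw [← iUnion_Icc_add_zsmul (by positivity : 0 < 2 * γ) (x - γ)]
  refine iUnion_congr fun k ↦ ?_
  simp only [zsmul_eq_mul, Int.cast_add, Int.cast_one]
  congr 1 <;> ring

theorem lintegral_le_mul_tsum_of_iUnion_eq_univ {α ι : Type*} [MeasurableSpace α] [Countable ι]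
    {μ : Measure α} {f : α → ℝ≥0∞} {s : ι → Set α} {b : ι → ℝ≥0∞} {N : ℝ≥0∞}
    (hs : ⋃ i, s i = univ) (hf : ∀ i, ∀ x ∈ s i, f x ≤ b i) (hμ : ∀ i, μ (s i) ≤ N) :
    ∫⁻ x, f x ∂μ ≤ N * ∑' i, b i :=
  calc ∫⁻ x, f x ∂μ = ∫⁻ x in ⋃ i, s i, f x ∂μ := by rw [hs, Measure.restrict_univ]
    _ ≤ ∑' i, ∫⁻ x in s i, f x ∂μ := lintegral_iUnion_le _ _
    _ ≤ ∑' i, N * b i := ENNReal.tsum_le_tsum fun i ↦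
        calc ∫⁻ x in s i, f x ∂μ ≤ ∫⁻ _ in s i, b i ∂μ := setLIntegral_mono measurable_const (hf i)
          _ = b i * μ (s i) := setLIntegral_const _ _
          _ ≤ N * b i := by rw [mul_comm]; gcongr; exact hμ i
    _ = N * ∑' i, b i := ENNReal.tsum_mul_left

theorem lintegral_exp_neg_sq_div_le {ν : Measure ℝ} (x : ℝ) {γ t : ℝ} {N : ℝ≥0∞} (hγ : 0 < γ)
    (ht : 0 < t) (htγ : t ≤ γ ^ 2) (hN : ∀ z, ν (Icc (z - γ) (z + γ)) ≤ N) :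
    ∫⁻ y, ENNReal.ofReal (exp (-(y - x) ^ 2 / (2 * t))) ∂ν ≤ N * ENNReal.ofReal shellSum := by
  rw [← tsum_ofReal_shellWeight_natAbs]
  exact lintegral_le_mul_tsum_of_iUnion_eq_univ (iUnion_Icc_two_mul_add x hγ)
    (fun k y hy ↦ ENNReal.ofReal_le_ofReal (exp_neg_sq_div_le_shellWeight k ht htγ hy))
    (fun k ↦ hN _)

theorem lintegral_one_div_sqrt_Ioc {s : ℝ} (hs : 0 ≤ s) :
    ∫⁻ v in Ioc 0 s, ENNReal.ofReal (1 / √v) = ENNReal.ofReal (2 * √s) := by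
  have hint : IntegrableOn (fun v : ℝ ↦ v ^ (-(1 / 2) : ℝ)) (Ioc 0 s) :=
    (intervalIntegrable_iff_integrableOn_Ioc_of_le hs).1
      (intervalIntegral.intervalIntegrable_rpow' (by norm_num))
  rw [setLIntegral_congr_fun (g := fun v ↦ ENNReal.ofReal (v ^ (-(1 / 2) : ℝ))) measurableSet_Ioc
      fun v hv ↦ by dsimp only; rw [rpow_neg hv.1.le, sqrt_eq_rpow, one_div],
    ← ofReal_integral_eq_lintegral_ofReal hint
      ((ae_restrict_mem measurableSet_Ioc).mono fun v hv ↦ by positivity [hv.1]),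
    ← intervalIntegral.integral_of_le hs, integral_rpow (Or.inl (by norm_num))]
  congr 1
  norm_num [sqrt_eq_rpow]
  ring

theorem lintegral_one_div_sqrt_mul_Ioc {c s : ℝ} (hc : 0 ≤ c) (hs : 0 ≤ s) :
    ∫⁻ v in Ioc 0 s, ENNReal.ofReal (1 / √(c * v)) = ENNReal.ofReal (1 / √c * (2 * √s)) := by
  have h1 : 0 ≤ 1 / √c := by positivity
  simp only [sqrt_mul hc, ← one_div_mul_one_div, ENNReal.ofReal_mul h1]
  rw [lintegral_const_mul' _ _ ENNReal.ofReal_ne_top, lintegral_one_div_sqrt_Ioc hs]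

theorem sqrt_c0_mul_sqrt_div_sq {s ε : ℝ} (hs : 0 ≤ s) (hε : 0 < ε) :
    √c0 * √(s / ε ^ 2) = 1 / √(2 * π * ε ^ 2) * (2 * √s) * shellSum := by
  rw [c0_eq, ← sqrt_mul (by positivity),
    ← sqrt_sq (mul_nonneg (by positivity) shellSum_nonneg)]
  congr 1
  rw [mul_pow, mul_pow, div_pow, mul_pow, sq_sqrt hs, sq_sqrt (by positivity)]
  field_simp

theorem stmt_6_general (x s ε γ : ℝ) (hs : 0 < s) (hε : 0 < ε) (hγ : 0 < γ)
    (hsmall : ε * Real.sqrt s ≤ γ)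
    (ν : Measure ℝ) (Nb : ℝ)
    (hN : ∀ z : ℝ, ν (Set.Icc (z - γ) (z + γ)) ≤ ENNReal.ofReal Nb) :
    ∫⁻ v in Set.Ioc (0 : ℝ) s, ∫⁻ y,
        ENNReal.ofReal ((1 / Real.sqrt (2 * Real.pi * v * ε ^ 2)) *
          Real.exp (-(y - x) ^ 2 / (2 * v * ε ^ 2))) ∂ν ≤
      ENNReal.ofReal (Real.sqrt c0 * Nb * Real.sqrt (s / ε ^ 2)) := by
  have hspace : ∀ v ∈ Ioc 0 s, ∫⁻ y, ENNReal.ofReal (exp (-(y - x) ^ 2 / (2 * v * ε ^ 2))) ∂ν ≤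
      ENNReal.ofReal Nb * ENNReal.ofReal shellSum := fun v hv ↦ by
    have hvγ : v * ε ^ 2 ≤ γ ^ 2 :=
      calc v * ε ^ 2 ≤ s * ε ^ 2 := by gcongr; exact hv.2
        _ = (ε * √s) ^ 2 := by rw [mul_pow, sq_sqrt hs.le, mul_comm]
        _ ≤ γ ^ 2 := by gcongr
    simpa only [mul_assoc] using lintegral_exp_neg_sq_div_le x hγ (by positivity [hv.1]) hvγ hN
  have hab : 0 ≤ 1 / √(2 * π * ε ^ 2) * (2 * √s) := by positivity
  have habS : 0 ≤ 1 / √(2 * π * ε ^ 2) * (2 * √s) * shellSum := mul_nonneg hab shellSum_nonneg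
  calc _ ≤ ∫⁻ v in Ioc 0 s, ENNReal.ofReal (1 / √(2 * π * ε ^ 2 * v)) *
          (ENNReal.ofReal Nb * ENNReal.ofReal shellSum) :=
        setLIntegral_mono' measurableSet_Ioc fun v hv ↦ by
          simp only [ENNReal.ofReal_mul (by positivity : 0 ≤ 1 / √(2 * π * v * ε ^ 2))]
          rw [lintegral_const_mul' _ _ ENNReal.ofReal_ne_top, mul_right_comm (2 * π) v]
          gcongr
          exact hspace v hv
    _ = ENNReal.ofReal (1 / √(2 * π * ε ^ 2) * (2 * √s)) *
          (ENNReal.ofReal Nb * ENNReal.ofReal shellSum) := by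
      rw [lintegral_mul_const' _ _ (by finiteness),
        lintegral_one_div_sqrt_mul_Ioc (by positivity) hs.le]
    _ = _ := by
      rw [mul_right_comm √c0, sqrt_c0_mul_sqrt_div_sq hs.le hε, ENNReal.ofReal_mul habS,
        ENNReal.ofReal_mul hab]
      ring

theorem stmt_6 (x s ε γ : ℝ) (hs : 0 < s) (hε : 0 < ε) (hγ : 0 < γ)
    (hsmall : ε * Real.sqrt s ≤ γ)
    (ν : Measure ℝ) [SigmaFinite ν] (Nb : ℝ)
    (hN : ∀ z : ℝ, ν (Set.Icc (z - γ) (z + γ)) ≤ ENNReal.ofReal Nb) :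
    ∫⁻ v in Set.Ioc (0 : ℝ) s, ∫⁻ y,
        ENNReal.ofReal ((1 / Real.sqrt (2 * Real.pi * v * ε ^ 2)) *
          Real.exp (-(y - x) ^ 2 / (2 * v * ε ^ 2))) ∂ν ≤
      ENNReal.ofReal (Real.sqrt c0 * Nb * Real.sqrt (s / ε ^ 2)) :=
  stmt_6_general x s ε γ hs hε hγ hsmall ν Nb hN
end

section
/- Let $\mu = \sum_{k=1}^{\infty} (\delta_{k^2} + \delta_{k^2 + 2^{-k}})$ on $\mathbb{R}$. Then $\sup_{x \in \mathbb{R}} \mu([x-1, x+1]) < \infty$ and $\sup_{y \in \mathbb{R}} \mu(\{y\}) = 1$, yet for every $\gamma > 0$, $\sup_{x \in \mathbb{R}} \mu([x - \gamma, x + \gamma]) \ge 2$. -/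
/-! The atoms come in pairs `{k², k² + 2⁻ᵏ}`. Distinct pairs are at least `3` apart and each
pair has width at most `1/2`, so an interval of length `2` meets at most one pair: it has mass at
most `2`, and a single point, which cannot carry both atoms of a pair, has mass at most `1`.
On the other hand, once `2⁻ᵏ ≤ γ` the whole `k`-th pair lies within `γ` of `k²`. -/

open MeasureTheory ENNReal

theorem ENNReal.tsum_le_of_support_subsingleton {ι : Type*} {f : ι → ℝ≥0∞} {c : ℝ≥0∞}
    (hf : (Function.support f).Subsingleton) (hc : ∀ i, f i ≤ c) : ∑' i, f i ≤ c := by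
  rcases hf.eq_empty_or_singleton with h | ⟨i, hi⟩
  · simp [Function.support_eq_empty_iff.mp h]
  · rw [tsum_eq_single i fun j hj =>
    Function.notMem_support.mp fun hj' => hj (Set.mem_singleton_iff.mp (hi ▸ hj'))]
    exact hc i

theorem ENNReal.indicator_one_apply_le_one {α : Type*} (S : Set α) (x : α) :
    S.indicator (1 : α → ℝ≥0∞) x ≤ 1 :=
  Set.indicator_le_self' (fun _ _ => zero_le) x

theorem support_indicator_add_indicator_subset {α ι : Type*} (a b : ι → α) (S : Set α) :
    Function.support (fun k => S.indicator (1 : α → ℝ≥0∞) (a k) + S.indicator 1 (b k)) ⊆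
      {k | a k ∈ S ∨ b k ∈ S} := by
  intro k hk
  by_contra h
  simp only [Set.mem_ofPred_eq, not_or] at h
  simp [Set.indicator_of_notMem h.1, Set.indicator_of_notMem h.2] at hk

section PairedDiracs

variable {α ι : Type*} [MeasurableSpace α]

noncomputable def pairedDiracs (a b : ι → α) : Measure α :=
  Measure.sum fun k => Measure.dirac (a k) + Measure.dirac (b k)

theorem pairedDiracs_apply {a b : ι → α} {S : Set α} (hS : MeasurableSet S) :
    pairedDiracs a b S = ∑' k, (S.indicator 1 (a k) + S.indicator 1 (b k)) := by
  simp only [pairedDiracs, Measure.sum_apply _ hS, Measure.add_apply, Measure.dirac_apply' _ hS]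

theorem pairedDiracs_le_two {a b : ι → α} {S : Set α} (hS : MeasurableSet S)
    (h : {k | a k ∈ S ∨ b k ∈ S}.Subsingleton) : pairedDiracs a b S ≤ 2 := by
  rw [pairedDiracs_apply hS, ← one_add_one_eq_two]
  exact ENNReal.tsum_le_of_support_subsingleton
    (h.anti (support_indicator_add_indicator_subset a b S))
    fun k => add_le_add (indicator_one_apply_le_one S _) (indicator_one_apply_le_one S _)

theorem pairedDiracs_singleton_le_one [MeasurableSingletonClass α] {a b : ι → α} {y : α}
    (hab : ∀ k, a k ≠ b k) (h : {k | a k ∈ ({y} : Set α) ∨ b k ∈ ({y} : Set α)}.Subsingleton) :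
    pairedDiracs a b {y} ≤ 1 := by
  rw [pairedDiracs_apply (MeasurableSet.singleton y)]
  refine ENNReal.tsum_le_of_support_subsingleton
    (h.anti (support_indicator_add_indicator_subset a b {y})) fun k => ?_
  by_cases hak : a k = y
  · have hbk : b k ≠ y := fun hbk => hab k (hak.trans hbk.symm)
    simp [hak, hbk]
  · simpa [hak] using indicator_one_apply_le_one {y} (b k)

theorem dirac_add_dirac_le_pairedDiracs (a b : ι → α) (k : ι) (S : Set α) :
    Measure.dirac (a k) S + Measure.dirac (b k) S ≤ pairedDiracs a b S :=
  Measure.le_sum (fun k => Measure.dirac (a k) + Measure.dirac (b k)) k S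

theorem one_le_pairedDiracs {a b : ι → α} {k : ι} {S : Set α} (ha : a k ∈ S) :
    1 ≤ pairedDiracs a b S :=
  calc 1 = Measure.dirac (a k) S := (Measure.dirac_apply_of_mem ha).symm
    _ ≤ Measure.dirac (a k) S + Measure.dirac (b k) S := le_self_add
    _ ≤ pairedDiracs a b S := dirac_add_dirac_le_pairedDiracs a b k S

theorem two_le_pairedDiracs {a b : ι → α} {k : ι} {S : Set α} (ha : a k ∈ S) (hb : b k ∈ S) :
    2 ≤ pairedDiracs a b S := by
  have := dirac_add_dirac_le_pairedDiracs a b k S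
  rwa [Measure.dirac_apply_of_mem ha, Measure.dirac_apply_of_mem hb, one_add_one_eq_two] at this

end PairedDiracs

noncomputable def squareAtom (k : ℕ) : ℝ := ((k : ℝ) + 1) ^ 2

noncomputable def nearSquareAtom (k : ℕ) : ℝ := squareAtom k + (2 : ℝ) ^ (-((k : ℤ) + 1))

theorem two_zpow_neg_succ_pos (k : ℕ) : 0 < (2 : ℝ) ^ (-((k : ℤ) + 1)) := zpow_pos two_pos _

theorem two_zpow_neg_succ_le_half (k : ℕ) : (2 : ℝ) ^ (-((k : ℤ) + 1)) ≤ 1 / 2 := by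
  calc (2 : ℝ) ^ (-((k : ℤ) + 1)) ≤ 2 ^ (-1 : ℤ) := zpow_le_zpow_right₀ one_le_two (by omega)
    _ = 1 / 2 := by norm_num

theorem exists_two_zpow_neg_succ_le {γ : ℝ} (hγ : 0 < γ) :
    ∃ n : ℕ, (2 : ℝ) ^ (-((n : ℤ) + 1)) ≤ γ := by
  obtain ⟨n, hn⟩ := exists_pow_lt_of_lt_one hγ (by norm_num : (1 / 2 : ℝ) < 1)
  refine ⟨n, le_of_lt (lt_of_le_of_lt ?_ hn)⟩
  calc (2 : ℝ) ^ (-((n : ℤ) + 1)) = (1 / 2) ^ (n + 1) := by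
        rw [one_div, inv_pow, ← zpow_natCast, ← zpow_neg]; push_cast; rfl
    _ ≤ (1 / 2) ^ n := pow_le_pow_of_le_one (by norm_num) (by norm_num) n.le_succ

theorem squareAtom_ne_nearSquareAtom (k : ℕ) : squareAtom k ≠ nearSquareAtom k :=
  (lt_add_of_pos_right _ (two_zpow_neg_succ_pos k)).ne

theorem squareAtom_add_three_le {k l : ℕ} (h : k < l) : squareAtom k + 3 ≤ squareAtom l := by
  have hkl : (k : ℝ) + 1 ≤ l := by exact_mod_cast h
  have hk : (0 : ℝ) ≤ k := k.cast_nonneg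
  unfold squareAtom; nlinarith

theorem subsingleton_setOf_atom_mem_Icc (x : ℝ) :
    {k | squareAtom k ∈ Set.Icc (x - 1) (x + 1) ∨
      nearSquareAtom k ∈ Set.Icc (x - 1) (x + 1)}.Subsingleton := by
  intro k hk l hl
  by_contra hne
  wlog hkl : k < l generalizing k l
  · exact this hl hk (Ne.symm hne) (lt_of_le_of_ne (not_lt.mp hkl) (Ne.symm hne))
  have hspace := squareAtom_add_three_le hkl
  have hk₀ := two_zpow_neg_succ_pos k
  have hl₀ := two_zpow_neg_succ_pos l
  have hk₁ := two_zpow_neg_succ_le_half k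
  simp only [nearSquareAtom, Set.mem_ofPred_eq, Set.mem_Icc] at hk hl
  rcases hk with ⟨_, _⟩ | ⟨_, _⟩ <;> rcases hl with ⟨_, _⟩ | ⟨_, _⟩ <;> linarith

theorem stmt_18 (μ : Measure ℝ)
    (hμ : μ = Measure.sum (fun k : ℕ =>
      Measure.dirac (((k : ℝ) + 1) ^ 2) +
      Measure.dirac (((k : ℝ) + 1) ^ 2 + (2 : ℝ) ^ (-((k : ℤ) + 1))))) :
    (⨆ x : ℝ, μ (Set.Icc (x - 1) (x + 1))) < ⊤ ∧
    (⨆ y : ℝ, μ {y}) = 1 ∧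
    ∀ γ : ℝ, 0 < γ → 2 ≤ ⨆ x : ℝ, μ (Set.Icc (x - γ) (x + γ)) := by
  replace hμ : μ = pairedDiracs squareAtom nearSquareAtom := hμ
  subst hμ
  refine ⟨?_, ?_, fun γ hγ => ?_⟩
  · refine lt_of_le_of_lt (iSup_le fun x => ?_) (ofNat_lt_top (n := 2))
    exact pairedDiracs_le_two measurableSet_Icc (subsingleton_setOf_atom_mem_Icc x)
  · refine le_antisymm (iSup_le fun y => ?_) (le_iSup_of_le 1 (one_le_pairedDiracs (k := 0) ?_))
    · have hy : ({y} : Set ℝ) ⊆ Set.Icc (y - 1) (y + 1) :=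
        Set.singleton_subset_iff.mpr ⟨by linarith, by linarith⟩
      exact pairedDiracs_singleton_le_one squareAtom_ne_nearSquareAtom
        ((subsingleton_setOf_atom_mem_Icc y).anti fun k => Or.imp (@hy _) (@hy _))
    · simp [squareAtom]
  · obtain ⟨n, hn⟩ := exists_two_zpow_neg_succ_le hγ
    refine le_iSup_of_le (squareAtom n) (two_le_pairedDiracs (k := n) ?_ ?_)
    · exact ⟨by linarith, by linarith⟩
    · have := two_zpow_neg_succ_pos n
      simp only [nearSquareAtom, Set.mem_Icc]
      constructor <;> linarith
end

section
/- Let $a > 0$, $t > 0$, and let $L^{(0)}_t(W)$ denote the local time at $0$ of a standard Brownian motion at time $t$, which has the same distribution as $|W_t|$. Then $\lim_{\varepsilon \to 0^+} \varepsilon^2 \log \mathbb{E}\, e^{a \varepsilon^{-1} |W_t|} = \frac{t a^2}{2}$. -/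
/-!
Since `c|x|` is one of `±cx`, for `c ≥ 0` we have `e^{cx} ≤ e^{c|x|} ≤ e^{cx} + e^{-cx}`. For a
centred Gaussian of variance `t` both moment generating values equal `e^{tc²/2}`, so with
`c = a/ε` the integral lies between `e^{ta²/(2ε²)}` and twice that; after `ε² log` the factor `2`
contributes only `ε² log 2 → 0`.
-/

open MeasureTheory ProbabilityTheory Filter Topology

lemma Real.exp_mul_abs_le_exp_mul_add_exp_neg_mul (c x : ℝ) :
    Real.exp (c * |x|) ≤ Real.exp (c * x) + Real.exp (-c * x) := by
  rcases abs_choice x with h | h <;> rw [h]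
  · linarith [Real.exp_pos (-c * x)]
  · rw [mul_neg, ← neg_mul]
    linarith [Real.exp_pos (c * x)]

lemma tendsto_sq_mul_log_of_exp_le_of_le_mul_exp {f : ℝ → ℝ} {K C : ℝ}
    (h_lower : ∀ ε > 0, Real.exp (K / ε ^ 2) ≤ f ε)
    (h_upper : ∀ ε > 0, f ε ≤ C * Real.exp (K / ε ^ 2)) :
    Tendsto (fun ε ↦ ε ^ 2 * Real.log (f ε)) (𝓝[>] 0) (𝓝 K) := by
  have hC : 0 < C := by
    have h := (h_lower 1 one_pos).trans (h_upper 1 one_pos)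
    exact pos_of_mul_pos_left ((Real.exp_pos _).trans_le h) (Real.exp_pos _).le
  have h_bounds : ∀ ε > 0,
      K ≤ ε ^ 2 * Real.log (f ε) ∧ ε ^ 2 * Real.log (f ε) ≤ K + ε ^ 2 * Real.log C := by
    intro ε hε
    have hε2 : 0 < ε ^ 2 := by positivity
    have hK : ε ^ 2 * (K / ε ^ 2) = K := by field_simp
    have h_log_lower : K / ε ^ 2 ≤ Real.log (f ε) := by
      rw [← Real.log_exp (K / ε ^ 2)]
      exact Real.log_le_log (Real.exp_pos _) (h_lower ε hε)
    have h_log_upper : Real.log (f ε) ≤ Real.log C + K / ε ^ 2 := by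
      calc Real.log (f ε) ≤ Real.log (C * Real.exp (K / ε ^ 2)) :=
            Real.log_le_log ((Real.exp_pos _).trans_le (h_lower ε hε)) (h_upper ε hε)
        _ = Real.log C + K / ε ^ 2 := by
            rw [Real.log_mul hC.ne' (Real.exp_ne_zero _), Real.log_exp]
    constructor
    · calc K = ε ^ 2 * (K / ε ^ 2) := hK.symm
        _ ≤ ε ^ 2 * Real.log (f ε) := by gcongr
    · calc ε ^ 2 * Real.log (f ε) ≤ ε ^ 2 * (Real.log C + K / ε ^ 2) := by gcongr
        _ = K + ε ^ 2 * Real.log C := by rw [mul_add, hK, add_comm]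
  have h_upper_lim : Tendsto (fun ε : ℝ ↦ K + ε ^ 2 * Real.log C) (𝓝[>] 0) (𝓝 K) := by
    have h : Tendsto (fun ε : ℝ ↦ K + ε ^ 2 * Real.log C) (𝓝 0) (𝓝 (K + 0 ^ 2 * Real.log C)) :=
      (continuous_const.add ((continuous_pow 2).mul continuous_const)).tendsto 0
    simpa using h.mono_left nhdsWithin_le_nhds
  exact tendsto_of_tendsto_of_tendsto_of_le_of_le' tendsto_const_nhds h_upper_lim
    (eventually_nhdsWithin_of_forall fun ε hε ↦ (h_bounds ε hε).1)
    (eventually_nhdsWithin_of_forall fun ε hε ↦ (h_bounds ε hε).2)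

section Gaussian

variable {Ω : Type*} [MeasurableSpace Ω] {μ : Measure Ω} [IsProbabilityMeasure μ]
  {X : Ω → ℝ} {v : NNReal}

lemma integrable_exp_mul_of_map_eq_gaussianReal {m : ℝ} (hX : μ.map X = gaussianReal m v)
    (c : ℝ) : Integrable (fun ω ↦ Real.exp (c * X ω)) μ := by
  rw [← mgf_pos_iff, mgf_gaussianReal hX]
  exact Real.exp_pos _

lemma integrable_exp_mul_abs_of_map_eq_gaussianReal {m : ℝ} (hX : μ.map X = gaussianReal m v)
    (c : ℝ) : Integrable (fun ω ↦ Real.exp (c * |X ω|)) μ := by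
  have hX_meas : AEMeasurable X μ := aemeasurable_of_map_neZero (by rw [hX]; infer_instance)
  refine ((integrable_exp_mul_of_map_eq_gaussianReal hX c).add
    (integrable_exp_mul_of_map_eq_gaussianReal hX (-c))).mono
    (hX_meas.abs.const_mul c).exp.aestronglyMeasurable (ae_of_all _ fun ω ↦ ?_)
  rw [Pi.add_apply, Real.norm_of_nonneg (Real.exp_pos _).le,
    Real.norm_of_nonneg (add_pos (Real.exp_pos _) (Real.exp_pos _)).le]
  exact Real.exp_mul_abs_le_exp_mul_add_exp_neg_mul c (X ω)

lemma exp_le_integral_exp_mul_abs_of_map_eq_gaussianReal (hX : μ.map X = gaussianReal 0 v)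
    {c : ℝ} (hc : 0 ≤ c) :
    Real.exp (v * c ^ 2 / 2) ≤ ∫ ω, Real.exp (c * |X ω|) ∂μ := by
  calc Real.exp (v * c ^ 2 / 2) = mgf X μ c := by simp [mgf_gaussianReal hX]
    _ ≤ ∫ ω, Real.exp (c * |X ω|) ∂μ :=
      integral_mono (integrable_exp_mul_of_map_eq_gaussianReal hX c)
        (integrable_exp_mul_abs_of_map_eq_gaussianReal hX c)
        fun ω ↦ Real.exp_le_exp.mpr (mul_le_mul_of_nonneg_left (le_abs_self _) hc)

lemma integral_exp_mul_abs_le_of_map_eq_gaussianReal (hX : μ.map X = gaussianReal 0 v) (c : ℝ) :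
    ∫ ω, Real.exp (c * |X ω|) ∂μ ≤ 2 * Real.exp (v * c ^ 2 / 2) := by
  have h_int_pos := integrable_exp_mul_of_map_eq_gaussianReal hX c
  have h_int_neg := integrable_exp_mul_of_map_eq_gaussianReal hX (-c)
  calc ∫ ω, Real.exp (c * |X ω|) ∂μ
      ≤ ∫ ω, (Real.exp (c * X ω) + Real.exp (-c * X ω)) ∂μ :=
        integral_mono (integrable_exp_mul_abs_of_map_eq_gaussianReal hX c)
          (h_int_pos.add h_int_neg) fun ω ↦ Real.exp_mul_abs_le_exp_mul_add_exp_neg_mul c (X ω)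
    _ = mgf X μ c + mgf X μ (-c) := integral_add h_int_pos h_int_neg
    _ = 2 * Real.exp (v * c ^ 2 / 2) := by simp [mgf_gaussianReal hX, two_mul]

end Gaussian

theorem stmt_19_general {Ω : Type*} [MeasurableSpace Ω] (μ : Measure Ω) [IsProbabilityMeasure μ]
    (a t : ℝ) (ha : 0 < a) (ht : 0 < t)
    (X : Ω → ℝ)
    (hX : Measure.map X μ = gaussianReal 0 (Real.toNNReal t)) :
    Tendsto (fun ε : ℝ => ε ^ 2 * Real.log (∫ ω, Real.exp (a * ε⁻¹ * |X ω|) ∂μ))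
      (nhdsWithin 0 (Set.Ioi 0)) (nhds (t * a ^ 2 / 2)) := by
  have h_exponent : ∀ ε : ℝ, (t.toNNReal : ℝ) * (a * ε⁻¹) ^ 2 / 2 = t * a ^ 2 / 2 / ε ^ 2 := by
    intro ε
    rw [Real.coe_toNNReal t ht.le]
    ring
  refine tendsto_sq_mul_log_of_exp_le_of_le_mul_exp (C := 2) (fun ε hε ↦ ?_) (fun ε _ ↦ ?_)
  · rw [← h_exponent]
    exact exp_le_integral_exp_mul_abs_of_map_eq_gaussianReal hX (by positivity)
  · rw [← h_exponent]
    exact integral_exp_mul_abs_le_of_map_eq_gaussianReal hX _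

theorem stmt_19 {Ω : Type*} [MeasurableSpace Ω] (μ : Measure Ω) [IsProbabilityMeasure μ]
    (a t : ℝ) (ha : 0 < a) (ht : 0 < t)
    (X : Ω → ℝ) (hXmeas : Measurable X)
    (hX : Measure.map X μ = gaussianReal 0 (Real.toNNReal t)) :
    Tendsto (fun ε : ℝ => ε ^ 2 * Real.log (∫ ω, Real.exp (a * ε⁻¹ * |X ω|) ∂μ))
      (nhdsWithin 0 (Set.Ioi 0)) (nhds (t * a ^ 2 / 2)) :=
  stmt_19_general μ a t ha ht X hX
end
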